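/- Let X be a real random variable and (cₙ) a sequence of positive reals with cₙ/√n nondecreasing and tending to infinity. If ∑ₙ P(|X| ≥ cₙ) < ∞, then for every ε > 0, ∑ₙ P(|X| > ε cₙ) < ∞. -/
import Mathlib

open MeasureTheory ProbabilityTheory Filter Set
open scoped ProbabilityTheory

lemma summable_div_comp {f : ℕ → ℝ} (hf : Summable f) (hnn : ∀ n, 0 ≤ f n)
    (K : ℕ) (hK : 0 < K) : Summable (fun n => f (n / K)) := by
  have hF : Summable (fun p : ℕ × Fin K => f p.1) := by
    rw [summable_prod_of_nonneg (fun p => hnn p.1)]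
    refine ⟨fun x => (hasSum_fintype _).summable, ?_⟩
    simpa [tsum_fintype, Finset.sum_const, nsmul_eq_mul] using hf.mul_left (K : ℝ)
  have hinj : Function.Injective (fun n : ℕ => ((n / K, ⟨n % K, Nat.mod_lt n hK⟩) : ℕ × Fin K)) := by
    intro a b hab
    simp only [Prod.mk.injEq, Fin.mk.injEq] at hab
    rw [← Nat.div_add_mod a K, ← Nat.div_add_mod b K, hab.1, hab.2]
  exact hF.comp_injective hinj

theorem stmt_4 {Ω : Type*} [MeasureSpace Ω] [IsProbabilityMeasure (ℙ : Measure Ω)]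
    (X : Ω → ℝ) (hX : Measurable X)
    (c : ℕ → ℝ) (hcpos : ∀ n, 1 ≤ n → 0 < c n)
    (hmono : ∀ m n, 1 ≤ m → m ≤ n → c m / Real.sqrt m ≤ c n / Real.sqrt n)
    (htop : Tendsto (fun n => c n / Real.sqrt n) atTop atTop)
    (hsum : Summable (fun n => (ℙ {ω | c n ≤ |X ω|}).toReal)) :
    ∀ ε > (0 : ℝ), Summable (fun n => (ℙ {ω | ε * c n < |X ω|}).toReal) := by
  intro ε hε
  set K : ℕ := ⌈ε⁻¹ ^ 2⌉₊ with hKdef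
  have hK : 0 < K := Nat.ceil_pos.2 (by positivity)
  -- key pointwise bound
  have key : ∀ n : ℕ, K ≤ n → c (n / K) ≤ ε * c n := by
    intro n hn
    set m : ℕ := n / K with hm
    have hm1 : 1 ≤ m := (Nat.one_le_div_iff hK).2 hn
    have hmn : m ≤ n := Nat.div_le_self n K
    have hn1 : 1 ≤ n := le_trans hm1 hmn
    have hsm : (0:ℝ) < Real.sqrt m := Real.sqrt_pos.2 (by exact_mod_cast hm1)
    have hsn : (0:ℝ) < Real.sqrt n := Real.sqrt_pos.2 (by exact_mod_cast hn1)
    have h1 : c m ≤ c n / Real.sqrt n * Real.sqrt m := by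
      have := hmono m n hm1 hmn
      calc c m = c m / Real.sqrt m * Real.sqrt m := by field_simp
        _ ≤ c n / Real.sqrt n * Real.sqrt m := by
            exact mul_le_mul_of_nonneg_right this hsm.le
    have hratio : Real.sqrt m / Real.sqrt n ≤ ε := by
      have hnpos : (0:ℝ) < n := by exact_mod_cast hn1
      have hKe : ε⁻¹ ^ 2 ≤ (K:ℝ) := Nat.le_ceil _
      have hmK : (m:ℝ) * K ≤ n := by exact_mod_cast Nat.div_mul_le_self n K
      have h3 : ε ^ 2 * ε⁻¹ ^ 2 = 1 := by field_simp
      have h2 : (m:ℝ) / n ≤ ε ^ 2 := by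
        rw [div_le_iff₀ hnpos]
        nlinarith [hmK, mul_le_mul_of_nonneg_left hKe (sq_nonneg ε), h3,
          Nat.cast_nonneg (α := ℝ) m, sq_nonneg ε]
      calc Real.sqrt m / Real.sqrt n = Real.sqrt ((m:ℝ) / n) := by
            rw [Real.sqrt_div (Nat.cast_nonneg m)]
        _ ≤ Real.sqrt (ε ^ 2) := Real.sqrt_le_sqrt h2
        _ = ε := by rw [Real.sqrt_sq hε.le]
    calc c m ≤ c n / Real.sqrt n * Real.sqrt m := h1
      _ = (Real.sqrt m / Real.sqrt n) * c n := by ring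
      _ ≤ ε * c n := mul_le_mul_of_nonneg_right hratio (hcpos n hn1).le
  -- summable dominating sequence
  have hnn : ∀ n, 0 ≤ (ℙ {ω | c n ≤ |X ω|}).toReal := fun n => ENNReal.toReal_nonneg
  have hg : Summable (fun n => (ℙ {ω | c (n / K) ≤ |X ω|}).toReal) :=
    summable_div_comp hsum hnn K hK
  rw [← summable_nat_add_iff K]
  refine Summable.of_nonneg_of_le (fun n => ENNReal.toReal_nonneg)
    (fun n => ?_) ((summable_nat_add_iff K).2 hg)
  have hsub : {ω | ε * c (n + K) < |X ω|} ⊆ {ω | c ((n + K) / K) ≤ |X ω|} := by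
    intro ω hω
    exact le_trans (key (n + K) (Nat.le_add_left K n)) (le_of_lt hω)
  exact ENNReal.toReal_mono (measure_ne_top _ _) (measure_mono hsub)
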